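/- arXiv:math/9906174 — 2 statements merged into one kernel-verified Lean document; each statement's English description precedes it below -/
import Mathlib

section
/- Let k be a number field and k̃ a quadratic extension of k. For each finite place v of k that is non-dyadic and unramified in k̃, define L_v(s) = (1 + 29·q_v^{-2(s-1)} − 21·q_v^{-4(s-1)} + 7·q_v^{-6(s-1)}) / ((1 − q_v^{-(2s-1)})(1 − q_v^{-2(s-1)})⁴) if v splits in k̃, and L_v(s) = (1 + 6·q_v^{-2(s-1)} − 3·q_v^{-4(s-1)}) / ((1 − q_v^{-(2s-1)})(1 − q_v^{-2(s-1)})³) if v is inert in k̃. Then: (1) each L_v(s) has an expansion L_v(s) = Σ_{n=0}^∞ ℓ_{v,n} q_v^{-ns} with ℓ_{v,0} = 1 and ℓ_{v,n} ≥ 0 for all n, convergent in the region Re(s) > 1; and (2) the product ∏_v L_v(s) over all such places converges absolutely and locally uniformly in the region Re(s) > 3/2. -/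
open NumberField Module Filter
open scoped Classical
open Topology

variable (k kt : Type*) [Field k] [Field kt] [NumberField k] [NumberField kt] [Algebra k kt]

/-- A finite place (nonzero prime ideal) `P` of `k` splits in `kt` if `P·O_{kt}` is a
product of two distinct primes. -/
def IsSplitIn (P : Ideal (𝓞 k)) : Prop :=
  ∃ Q₁ Q₂ : Ideal (𝓞 kt), Q₁.IsPrime ∧ Q₂.IsPrime ∧ Q₁ ≠ Q₂ ∧
    Ideal.map (algebraMap (𝓞 k) (𝓞 kt)) P = Q₁ * Q₂

/-- A finite place (nonzero prime ideal) `P` of `k` is inert in `kt` if `P·O_{kt}` is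
prime. -/
def IsInertIn (P : Ideal (𝓞 k)) : Prop :=
  (Ideal.map (algebraMap (𝓞 k) (𝓞 kt)) P).IsPrime

/-- The set of finite places of `k` that are non-dyadic and unramified (split or inert)
in `kt`. -/
def GoodPlace : Type _ :=
  {P : Ideal (𝓞 k) // P.IsPrime ∧ P ≠ ⊥ ∧ (2 : 𝓞 k) ∉ P ∧
    (IsSplitIn k kt P ∨ IsInertIn k kt P)}

/-- The majorizing Dirichlet series `L_v(s)` at a split place with residue cardinality
`q`. -/
noncomputable def Lsplit (q : ℕ) (s : ℂ) : ℂ :=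
  (1 + 29 * (q : ℂ) ^ (-(2 * (s - 1))) - 21 * ((q : ℂ) ^ (-(2 * (s - 1)))) ^ 2 +
      7 * ((q : ℂ) ^ (-(2 * (s - 1)))) ^ 3) /
    ((1 - (q : ℂ) ^ (-(2 * s - 1))) * (1 - (q : ℂ) ^ (-(2 * (s - 1)))) ^ 4)

/-- The majorizing Dirichlet series `L_v(s)` at an inert place with residue cardinality
`q`. -/
noncomputable def Linert (q : ℕ) (s : ℂ) : ℂ :=
  (1 + 6 * (q : ℂ) ^ (-(2 * (s - 1))) - 3 * ((q : ℂ) ^ (-(2 * (s - 1)))) ^ 2) /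
    ((1 - (q : ℂ) ^ (-(2 * s - 1))) * (1 - (q : ℂ) ^ (-(2 * (s - 1)))) ^ 3)

/-- The majorizing local factor `L_v` at a non-dyadic place `v` of `k` unramified in
`kt`. -/
noncomputable def Lv (P : GoodPlace k kt) (s : ℂ) : ℂ :=
  if IsSplitIn k kt P.1 then Lsplit (Ideal.absNorm P.1) s else Linert (Ideal.absNorm P.1) s

section SeriesLemmas

private lemma hasSum_shift {a a' : ℕ → ℂ} {t S : ℂ}
    (h : HasSum (fun m => a m * t ^ m) S) (h0 : a' 0 = 0) (hs : ∀ m, a' (m + 1) = a m) :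
    HasSum (fun m => a' m * t ^ m) (t * S) := by
  have h2 : HasSum (fun m => a' (m + 1) * t ^ (m + 1)) (t * S) := by
    have := h.mul_left t
    simp only [pow_succ, hs]
    convert this using 2 with m
    case e'_5 => ring
    case e'_3 => rfl
  have h3 := (hasSum_nat_add_iff (f := fun m => a' m * t ^ m) 1).mp h2
  simpa [h0] using h3

/-- Dirichlet coefficients of the split local factor as a power series in `q^(-2(s-1))`. -/
noncomputable def esplit (m : ℕ) : ℝ :=
  ((m+3).choose 3 : ℝ) + 29 * ((m+2).choose 3) - 21 * ((m+1).choose 3) + 7 * (m.choose 3)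

/-- Dirichlet coefficients of the inert local factor as a power series in `q^(-2(s-1))`. -/
noncomputable def einert (m : ℕ) : ℝ :=
  ((m+2).choose 2 : ℝ) + 6 * ((m+1).choose 2) - 3 * (m.choose 2)

lemma esplit_zero : esplit 0 = 1 := by norm_num [esplit, Nat.choose]

lemma einert_zero : einert 0 = 1 := by norm_num [einert, Nat.choose]

lemma esplit_nonneg (m : ℕ) : 0 ≤ esplit m := by
  have h1 : ((m+1).choose 3 : ℝ) ≤ ((m+2).choose 3 : ℝ) := by
    exact_mod_cast Nat.choose_le_choose 3 (by omega)
  have h2 : (0:ℝ) ≤ ((m+3).choose 3 : ℝ) := by positivity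
  have h3 : (0:ℝ) ≤ ((m+2).choose 3 : ℝ) := by positivity
  have h4 : (0:ℝ) ≤ (m.choose 3 : ℝ) := by positivity
  unfold esplit; linarith

lemma einert_nonneg (m : ℕ) : 0 ≤ einert m := by
  have h1 : ((m).choose 2 : ℝ) ≤ ((m+1).choose 2 : ℝ) := by
    exact_mod_cast Nat.choose_le_choose 2 (by omega)
  have h2 : (0:ℝ) ≤ ((m+2).choose 2 : ℝ) := by positivity
  have h3 : (0:ℝ) ≤ ((m+1).choose 2 : ℝ) := by positivity
  unfold einert; linarith

lemma esplit_le (m : ℕ) : esplit m ≤ 37 * ((m+3).choose 3 : ℝ) := by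
  have h1 : ((m+2).choose 3 : ℝ) ≤ ((m+3).choose 3 : ℝ) := by
    exact_mod_cast Nat.choose_le_choose 3 (by omega)
  have h4 : ((m).choose 3 : ℝ) ≤ ((m+3).choose 3 : ℝ) := by
    exact_mod_cast Nat.choose_le_choose 3 (by omega)
  have h2 : (0:ℝ) ≤ ((m+1).choose 3 : ℝ) := by positivity
  unfold esplit; linarith

lemma einert_le (m : ℕ) : einert m ≤ 7 * ((m+2).choose 2 : ℝ) := by
  have h1 : ((m+1).choose 2 : ℝ) ≤ ((m+2).choose 2 : ℝ) := by
    exact_mod_cast Nat.choose_le_choose 2 (by omega)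
  have h2 : (0:ℝ) ≤ ((m).choose 2 : ℝ) := by positivity
  unfold einert; linarith

lemma esplit_summable {τ : ℝ} (h0 : 0 ≤ τ) (h : τ < 1) :
    Summable (fun m => esplit m * τ ^ m) := by
  have hb : Summable (fun m : ℕ => 37 * (((m+3).choose 3 : ℝ) * τ ^ m)) :=
    (summable_choose_mul_geometric_of_norm_lt_one 3 (r := τ)
      (by simpa [abs_of_nonneg h0] using h)).mul_left 37
  refine Summable.of_nonneg_of_le
    (fun m => mul_nonneg (esplit_nonneg m) (pow_nonneg h0 m)) (fun m => ?_) hb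
  have := esplit_le m
  have h2 : (0:ℝ) ≤ τ ^ m := by positivity
  nlinarith

lemma einert_summable {τ : ℝ} (h0 : 0 ≤ τ) (h : τ < 1) :
    Summable (fun m => einert m * τ ^ m) := by
  have hb : Summable (fun m : ℕ => 7 * (((m+2).choose 2 : ℝ) * τ ^ m)) :=
    (summable_choose_mul_geometric_of_norm_lt_one 2 (r := τ)
      (by simpa [abs_of_nonneg h0] using h)).mul_left 7
  refine Summable.of_nonneg_of_le
    (fun m => mul_nonneg (einert_nonneg m) (pow_nonneg h0 m)) (fun m => ?_) hb
  have := einert_le m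
  have h2 : (0:ℝ) ≤ τ ^ m := by positivity
  nlinarith

lemma hasSum_esplit {t : ℂ} (ht : ‖t‖ < 1) :
    HasSum (fun m => (esplit m : ℂ) * t ^ m)
      ((1 + 29*t - 21*t^2 + 7*t^3) / (1 - t)^4) := by
  have ht1 : (1:ℂ) - t ≠ 0 := by
    intro h
    rw [sub_eq_zero] at h
    rw [← h] at ht; simp at ht
  have h0 : HasSum (fun m : ℕ => (((m+3).choose 3 : ℕ) : ℂ) * t ^ m) (1/(1-t)^4) := by
    simpa using hasSum_choose_mul_geometric_of_norm_lt_one 3 ht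
  have h1 : HasSum (fun m : ℕ => (((m+2).choose 3 : ℕ) : ℂ) * t ^ m) (t * (1/(1-t)^4)) := by
    refine hasSum_shift h0 (by norm_num) (fun m => ?_)
    norm_num [show m+1+2 = m+3 by omega]
  have h2 : HasSum (fun m : ℕ => (((m+1).choose 3 : ℕ) : ℂ) * t ^ m)
      (t * (t * (1/(1-t)^4))) := by
    refine hasSum_shift h1 (by norm_num [Nat.choose]) (fun m => ?_)
    norm_num [show m+1+1 = m+2 by omega]
  have h3 : HasSum (fun m : ℕ => ((m.choose 3 : ℕ) : ℂ) * t ^ m)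
      (t * (t * (t * (1/(1-t)^4)))) := by
    refine hasSum_shift h2 (by norm_num) (fun m => ?_)
    norm_num
  have H := ((h0.add (h1.mul_left 29)).sub (h2.mul_left 21)).add (h3.mul_left 7)
  have hfun : ∀ m : ℕ, ((((m+3).choose 3 : ℕ) : ℂ) * t ^ m
      + 29 * ((((m+2).choose 3 : ℕ) : ℂ) * t ^ m)
      - 21 * ((((m+1).choose 3 : ℕ) : ℂ) * t ^ m)) + 7 * (((m.choose 3 : ℕ) : ℂ) * t ^ m)
      = (esplit m : ℂ) * t ^ m := by
    intro m
    unfold esplit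
    push_cast
    ring
  have hval : (1/(1-t)^4 + 29 * (t * (1/(1-t)^4)) - 21 * (t * (t * (1/(1-t)^4))))
      + 7 * (t * (t * (t * (1/(1-t)^4)))) = (1 + 29*t - 21*t^2 + 7*t^3) / (1 - t)^4 := by
    field_simp
  rw [← hval]
  exact H.congr_fun (fun m => (hfun m).symm)

lemma hasSum_einert {t : ℂ} (ht : ‖t‖ < 1) :
    HasSum (fun m => (einert m : ℂ) * t ^ m)
      ((1 + 6*t - 3*t^2) / (1 - t)^3) := by
  have ht1 : (1:ℂ) - t ≠ 0 := by
    intro h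
    rw [sub_eq_zero] at h
    rw [← h] at ht; simp at ht
  have h0 : HasSum (fun m : ℕ => (((m+2).choose 2 : ℕ) : ℂ) * t ^ m) (1/(1-t)^3) := by
    simpa using hasSum_choose_mul_geometric_of_norm_lt_one 2 ht
  have h1 : HasSum (fun m : ℕ => (((m+1).choose 2 : ℕ) : ℂ) * t ^ m) (t * (1/(1-t)^3)) := by
    refine hasSum_shift h0 (by norm_num [Nat.choose]) (fun m => ?_)
    norm_num [show m+1+1 = m+2 by omega]
  have h2 : HasSum (fun m : ℕ => ((m.choose 2 : ℕ) : ℂ) * t ^ m)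
      (t * (t * (1/(1-t)^3))) := by
    refine hasSum_shift h1 (by norm_num) (fun m => ?_)
    norm_num
  have H := (h0.add (h1.mul_left 6)).sub (h2.mul_left 3)
  have hfun : ∀ m : ℕ, ((((m+2).choose 2 : ℕ) : ℂ) * t ^ m
      + 6 * ((((m+1).choose 2 : ℕ) : ℂ) * t ^ m))
      - 3 * (((m.choose 2 : ℕ) : ℂ) * t ^ m)
      = (einert m : ℂ) * t ^ m := by
    intro m
    unfold einert
    push_cast
    ring
  have hval : (1/(1-t)^3 + 6 * (t * (1/(1-t)^3))) - 3 * (t * (t * (1/(1-t)^3)))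
      = (1 + 6*t - 3*t^2) / (1 - t)^3 := by
    field_simp
  rw [← hval]
  exact H.congr_fun (fun m => (hfun m).symm)

lemma norm_lt_aux {q : ℕ} (hq : 2 ≤ q) {s : ℂ} (hs : 1 < s.re) :
    ‖(q:ℂ)^2 * ((q:ℂ)^(-s))^2‖ < 1 ∧ ‖(q:ℂ) * ((q:ℂ)^(-s))^2‖ < 1 := by
  have hq0 : (0:ℝ) < q := by positivity
  have hq1 : (1:ℝ) < q := by exact_mod_cast hq
  have hxn : ‖(q:ℂ)^(-s)‖ = (q:ℝ) ^ (-s.re) := by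
    rw [Complex.norm_natCast_cpow_of_pos (by omega), Complex.neg_re]
  have hqnat : ‖(q:ℂ)‖ = (q:ℝ) := by simp
  constructor
  · have htn : ‖(q:ℂ)^2 * ((q:ℂ)^(-s))^2‖ = (q:ℝ) ^ ((2:ℝ) - 2*s.re) := by
      rw [norm_mul, norm_pow, norm_pow, hxn, hqnat,
        ← Real.rpow_natCast (q:ℝ) 2, ← Real.rpow_natCast ((q:ℝ)^(-s.re)) 2,
        ← Real.rpow_mul hq0.le, ← Real.rpow_add hq0]
      norm_num
      ring_nf
    rw [htn]
    exact Real.rpow_lt_one_of_one_lt_of_neg hq1 (by linarith)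
  · have hun : ‖(q:ℂ) * ((q:ℂ)^(-s))^2‖ = (q:ℝ) ^ ((1:ℝ) - 2*s.re) := by
      rw [norm_mul, norm_pow, hxn, hqnat,
        ← Real.rpow_natCast ((q:ℝ)^(-s.re)) 2, ← Real.rpow_mul hq0.le]
      nth_rewrite 1 [← Real.rpow_one (q:ℝ)]
      rw [← Real.rpow_add hq0]
      norm_num
      ring_nf
    rw [hun]
    exact Real.rpow_lt_one_of_one_lt_of_neg hq1 (by linarith)

lemma local_hasSum {q : ℕ} (hq : 2 ≤ q) {s : ℂ} (hs : 1 < s.re)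
    (e : ℕ → ℝ) (he0 : ∀ m, 0 ≤ e m)
    (hnorm : ∀ τ : ℝ, 0 ≤ τ → τ < 1 → Summable (fun m => e m * τ ^ m))
    (F : ℂ → ℂ) (hesum : ∀ t : ℂ, ‖t‖ < 1 → HasSum (fun m => (e m : ℂ) * t ^ m) (F t)) :
    HasSum (fun n : ℕ =>
        ((if 2 ∣ n then ∑ j ∈ Finset.range (n/2+1), (q:ℝ)^(2*(n/2)-j) * e (n/2-j) else 0 : ℝ) : ℂ)
          * (q : ℂ) ^ (-(n : ℂ) * s))
      ((1 - (q:ℂ) * ((q:ℂ)^(-s))^2)⁻¹ * F ((q:ℂ)^2 * ((q:ℂ)^(-s))^2)) := by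
  have hq0 : (0:ℝ) < q := by positivity
  set x : ℂ := (q:ℂ)^(-s) with hx
  set t : ℂ := (q:ℂ)^2 * x^2 with htdef
  set u : ℂ := (q:ℂ) * x^2 with hudef
  have ht1 : ‖t‖ < 1 := (norm_lt_aux hq hs).1
  have hu1 : ‖u‖ < 1 := (norm_lt_aux hq hs).2
  have hf : Summable (fun a : ℕ => ‖u ^ a‖) := by
    simp only [norm_pow]
    exact summable_geometric_of_lt_one (norm_nonneg u) hu1
  have hg : Summable (fun b : ℕ => ‖(e b : ℂ) * t ^ b‖) := by
    have heq : ∀ b : ℕ, ‖(e b : ℂ) * t ^ b‖ = e b * ‖t‖ ^ b := by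
      intro b
      rw [norm_mul, norm_pow, Complex.norm_real, Real.norm_of_nonneg (he0 b)]
    simpa only [heq] using hnorm ‖t‖ (norm_nonneg t) ht1
  have hprod := hasSum_sum_range_mul_of_summable_norm hf hg
  rw [(hasSum_geometric_of_norm_lt_one hu1).tsum_eq, (hesum t ht1).tsum_eq] at hprod
  have hx2 : ∀ n : ℕ, (q:ℂ)^(-(n:ℂ)*s) = x ^ n := by
    intro n
    rw [show -(n:ℂ)*s = (n:ℕ)*(-s) by push_cast; ring, Complex.cpow_nat_mul]
  have hinj : Function.Injective (fun m : ℕ => 2*m) := fun a b h => by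
    simp only at h; omega
  rw [← Function.Injective.hasSum_iff hinj ?_]
  · refine hprod.congr_fun fun m => ?_
    have hdvd : 2 ∣ 2*m := ⟨m, rfl⟩
    have hdiv : 2*m/2 = m := by omega
    simp only [Function.comp_apply, if_pos hdvd, hdiv, hx2]
    push_cast [Finset.sum_mul]
    refine (Finset.sum_congr rfl fun j hj => ?_).symm
    have hj' : j ≤ m := Nat.lt_succ_iff.mp (Finset.mem_range.mp hj)
    obtain ⟨c, rfl⟩ : ∃ c, m = j + c := ⟨m - j, by omega⟩
    rw [show j + c - j = c by omega, show 2*(j+c) - j = j + 2*c by omega]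
    rw [hudef, htdef]
    push_cast
    ring
  · intro n hn
    have hodd : ¬ 2 ∣ n := by
      rintro ⟨m, rfl⟩
      exact hn ⟨m, rfl⟩
    simp [hodd]

end SeriesLemmas

section NormEstimates

lemma key_est_split {t u : ℂ} (ht : ‖t‖ ≤ 1/2) (hu : ‖u‖ ≤ ‖t‖) :
    ‖(1 + 29*t - 21*t^2 + 7*t^3)/((1-u)*(1-t)^4) - 1‖ ≤ 4096 * ‖t‖ := by
  have h0 : (0:ℝ) ≤ ‖t‖ := norm_nonneg t
  have hu2 : ‖u‖ ≤ 1/2 := hu.trans ht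
  have hOneSubT : 1/2 ≤ ‖1-t‖ := by
    have := norm_sub_norm_le (1:ℂ) t
    simp only [norm_one] at this
    linarith
  have hOneSubU : 1/2 ≤ ‖1-u‖ := by
    have := norm_sub_norm_le (1:ℂ) u
    simp only [norm_one] at this
    linarith
  have hwle : ‖1-t‖ ≤ 3/2 := by
    have := norm_sub_le (1:ℂ) t
    simp only [norm_one] at this
    linarith
  have hD : (1/32 : ℝ) ≤ ‖(1-u)*(1-t)^4‖ := by
    rw [norm_mul, norm_pow]
    have h4 : (1/2:ℝ)^4 ≤ ‖1-t‖^4 := pow_le_pow_left₀ (by norm_num) hOneSubT 4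
    nlinarith
  have hDne : ((1-u)*(1-t)^4) ≠ 0 := by
    intro h
    rw [h, norm_zero] at hD
    linarith
  have key : (1 + 29*t - 21*t^2 + 7*t^3)/((1-u)*(1-t)^4) - 1
      = ((29*t - 21*t^2 + 7*t^3) + ((1:ℂ) - (1-u)*(1-t)^4)) / ((1-u)*(1-t)^4) := by
    rw [div_sub_one hDne]
    ring
  have hn1 : ‖29*t - 21*t^2 + 7*t^3‖ ≤ 60 * ‖t‖ := by
    have h3 := norm_add_le (29*t - 21*t^2) (7*t^3)
    have h2 := norm_sub_le (29*t) (21*t^2)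
    have e2 : ‖t‖^2 ≤ ‖t‖ := by nlinarith
    have e3 : ‖t‖^3 ≤ ‖t‖ := by nlinarith
    have c29 : ‖(29:ℂ)*t‖ = 29*‖t‖ := by rw [norm_mul]; norm_num
    have c21 : ‖(21:ℂ)*t^2‖ = 21*‖t‖^2 := by rw [norm_mul, norm_pow]; norm_num
    have c7 : ‖(7:ℂ)*t^3‖ = 7*‖t‖^3 := by rw [norm_mul, norm_pow]; norm_num
    rw [c29, c21] at h2
    rw [c7] at h3
    linarith
  have hid : (1:ℂ) - (1-u)*(1-t)^4 = t * (1 + (1-t) + (1-t)^2 + (1-t)^3) + u * (1-t)^4 := by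
    ring
  have hn2 : ‖(1:ℂ) - (1-u)*(1-t)^4‖ ≤ 15 * ‖t‖ := by
    rw [hid]
    have hA : ‖1 + (1-t) + (1-t)^2 + (1-t)^3‖ ≤ 1 + 3/2 + (3/2)^2 + (3/2)^3 := by
      have a1 := norm_add_le (1 + (1-t) + (1-t)^2) ((1-t)^3)
      have a2 := norm_add_le (1 + (1-t) : ℂ) ((1-t)^2)
      have a3 := norm_add_le (1:ℂ) (1-t)
      simp only [norm_pow, norm_one] at a1 a2 a3
      have p2 : ‖1-t‖^2 ≤ (3/2:ℝ)^2 := pow_le_pow_left₀ (norm_nonneg _) hwle 2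
      have p3 : ‖1-t‖^3 ≤ (3/2:ℝ)^3 := pow_le_pow_left₀ (norm_nonneg _) hwle 3
      linarith
    have hB : ‖(1-t)^4‖ ≤ (3/2:ℝ)^4 := by
      rw [norm_pow]
      exact pow_le_pow_left₀ (norm_nonneg _) hwle 4
    have := norm_add_le (t * (1 + (1-t) + (1-t)^2 + (1-t)^3)) (u * (1-t)^4)
    rw [norm_mul, norm_mul] at this
    nlinarith [norm_nonneg (1 + (1-t) + (1-t)^2 + (1-t)^3 : ℂ), norm_nonneg u,
      norm_nonneg (1-t:ℂ)]
  rw [key, norm_div]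
  have hnum : ‖(29*t - 21*t^2 + 7*t^3) + ((1:ℂ) - (1-u)*(1-t)^4)‖ ≤ 75 * ‖t‖ := by
    have := norm_add_le (29*t - 21*t^2 + 7*t^3) ((1:ℂ) - (1-u)*(1-t)^4)
    linarith
  have hq : ‖(29*t - 21*t^2 + 7*t^3) + ((1:ℂ) - (1-u)*(1-t)^4)‖ / ‖(1-u)*(1-t)^4‖
      ≤ (75 * ‖t‖) / (1/32) := by
    apply div_le_div₀ (by positivity) hnum (by norm_num) hD
  calc _ ≤ (75 * ‖t‖) / (1/32) := hq
    _ ≤ 4096 * ‖t‖ := by linarith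

lemma key_est_inert {t u : ℂ} (ht : ‖t‖ ≤ 1/2) (hu : ‖u‖ ≤ ‖t‖) :
    ‖(1 + 6*t - 3*t^2)/((1-u)*(1-t)^3) - 1‖ ≤ 4096 * ‖t‖ := by
  have h0 : (0:ℝ) ≤ ‖t‖ := norm_nonneg t
  have hu2 : ‖u‖ ≤ 1/2 := hu.trans ht
  have hOneSubT : 1/2 ≤ ‖1-t‖ := by
    have := norm_sub_norm_le (1:ℂ) t
    simp only [norm_one] at this
    linarith
  have hOneSubU : 1/2 ≤ ‖1-u‖ := by
    have := norm_sub_norm_le (1:ℂ) u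
    simp only [norm_one] at this
    linarith
  have hwle : ‖1-t‖ ≤ 3/2 := by
    have := norm_sub_le (1:ℂ) t
    simp only [norm_one] at this
    linarith
  have hD : (1/16 : ℝ) ≤ ‖(1-u)*(1-t)^3‖ := by
    rw [norm_mul, norm_pow]
    have h4 : (1/2:ℝ)^3 ≤ ‖1-t‖^3 := pow_le_pow_left₀ (by norm_num) hOneSubT 3
    nlinarith
  have hDne : ((1-u)*(1-t)^3) ≠ 0 := by
    intro h
    rw [h, norm_zero] at hD
    linarith
  have key : (1 + 6*t - 3*t^2)/((1-u)*(1-t)^3) - 1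
      = ((6*t - 3*t^2) + ((1:ℂ) - (1-u)*(1-t)^3)) / ((1-u)*(1-t)^3) := by
    rw [div_sub_one hDne]
    ring
  have hn1 : ‖6*t - 3*t^2‖ ≤ 9 * ‖t‖ := by
    have h2 := norm_sub_le (6*t) (3*t^2)
    have e2 : ‖t‖^2 ≤ ‖t‖ := by nlinarith
    have c6 : ‖(6:ℂ)*t‖ = 6*‖t‖ := by rw [norm_mul]; norm_num
    have c3 : ‖(3:ℂ)*t^2‖ = 3*‖t‖^2 := by rw [norm_mul, norm_pow]; norm_num
    rw [c6, c3] at h2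
    linarith
  have hid : (1:ℂ) - (1-u)*(1-t)^3 = t * (1 + (1-t) + (1-t)^2) + u * (1-t)^3 := by
    ring
  have hn2 : ‖(1:ℂ) - (1-u)*(1-t)^3‖ ≤ 9 * ‖t‖ := by
    rw [hid]
    have hA : ‖1 + (1-t) + (1-t)^2‖ ≤ 1 + 3/2 + (3/2)^2 := by
      have a2 := norm_add_le (1 + (1-t) : ℂ) ((1-t)^2)
      have a3 := norm_add_le (1:ℂ) (1-t)
      simp only [norm_pow, norm_one] at a2 a3
      have p2 : ‖1-t‖^2 ≤ (3/2:ℝ)^2 := pow_le_pow_left₀ (norm_nonneg _) hwle 2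
      linarith
    have hB : ‖(1-t)^3‖ ≤ (3/2:ℝ)^3 := by
      rw [norm_pow]
      exact pow_le_pow_left₀ (norm_nonneg _) hwle 3
    have := norm_add_le (t * (1 + (1-t) + (1-t)^2)) (u * (1-t)^3)
    rw [norm_mul, norm_mul] at this
    nlinarith [norm_nonneg (1 + (1-t) + (1-t)^2 : ℂ), norm_nonneg u, norm_nonneg (1-t:ℂ)]
  rw [key, norm_div]
  have hnum : ‖(6*t - 3*t^2) + ((1:ℂ) - (1-u)*(1-t)^3)‖ ≤ 18 * ‖t‖ := by
    have := norm_add_le (6*t - 3*t^2) ((1:ℂ) - (1-u)*(1-t)^3)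
    linarith
  have hq : ‖(6*t - 3*t^2) + ((1:ℂ) - (1-u)*(1-t)^3)‖ / ‖(1-u)*(1-t)^3‖
      ≤ (18 * ‖t‖) / (1/16) := by
    apply div_le_div₀ (by positivity) hnum (by norm_num) hD
  calc _ ≤ (18 * ‖t‖) / (1/16) := hq
    _ ≤ 4096 * ‖t‖ := by linarith

end NormEstimates

section UniformProducts

lemma norm_prod_sub_one_le {ι : Type*} (S : Finset ι) (a : ι → ℂ) :
    ‖(∏ i ∈ S, a i) - 1‖ ≤ (∏ i ∈ S, (1 + ‖a i - 1‖)) - 1 := by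
  classical
  induction S using Finset.induction_on with
  | empty => simp
  | @insert j S' hnotmem ih =>
    rw [Finset.prod_insert hnotmem, Finset.prod_insert hnotmem]
    have hP : ‖∏ i ∈ S', a i‖ ≤ ∏ i ∈ S', (1 + ‖a i - 1‖) := by
      have h1 := norm_sub_norm_le (∏ i ∈ S', a i) 1
      simp only [norm_one] at h1
      linarith
    have key : a j * ∏ i ∈ S', a i - 1
        = (a j - 1) * ∏ i ∈ S', a i + ((∏ i ∈ S', a i) - 1) := by ring
    rw [key]
    have h2 := norm_add_le ((a j - 1) * ∏ i ∈ S', a i) ((∏ i ∈ S', a i) - 1)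
    rw [norm_mul] at h2
    have h3 : ‖a j - 1‖ * ‖∏ i ∈ S', a i‖ ≤ ‖a j - 1‖ * ∏ i ∈ S', (1 + ‖a i - 1‖) :=
      mul_le_mul_of_nonneg_left hP (norm_nonneg _)
    have h5 : (0:ℝ) ≤ ∏ i ∈ S', (1 + ‖a i - 1‖) :=
      Finset.prod_nonneg (fun i _ => by positivity)
    nlinarith [norm_nonneg (a j - 1)]

lemma prod_one_add_le_exp {ι : Type*} (S : Finset ι) (u : ι → ℝ) (hu : ∀ i, 0 ≤ u i) :
    (∏ i ∈ S, (1 + u i)) ≤ Real.exp (∑ i ∈ S, u i) := by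
  rw [Real.exp_sum]
  refine Finset.prod_le_prod (fun i _ => by have := hu i; linarith) (fun i _ => ?_)
  have := Real.add_one_le_exp (u i)
  linarith

/-- Weierstrass-type criterion: uniform convergence of partial products on a set,
given a summable uniform bound on `‖f i x - 1‖`. -/
lemma tendstoUniformlyOn_finset_prod {ι : Type*} {f : ι → ℂ → ℂ} {K : Set ℂ} {u : ι → ℝ}
    (hu : Summable u) (hle : ∀ i, ∀ x ∈ K, ‖f i x - 1‖ ≤ u i) :
    TendstoUniformlyOn (fun (T : Finset ι) x => ∏ i ∈ T, f i x)
      (fun x => ∏' i, f i x) atTop K := by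
  classical
  rcases K.eq_empty_or_nonempty with rfl | ⟨x₀, hx₀⟩
  · exact tendstoUniformlyOn_empty
  have hu0 : ∀ i, 0 ≤ u i := fun i => le_trans (norm_nonneg _) (hle i x₀ hx₀)
  set B := Real.exp (∑' i, u i) with hB
  have hB1 : (1:ℝ) ≤ B := by
    rw [hB]
    have : (0:ℝ) ≤ ∑' i, u i := tsum_nonneg hu0
    calc (1:ℝ) = Real.exp 0 := by simp
      _ ≤ Real.exp (∑' i, u i) := Real.exp_le_exp.mpr this
  have hprodle : ∀ (S : Finset ι) (x : ℂ), x ∈ K → ‖(∏ i ∈ S, f i x) - 1‖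
      ≤ Real.exp (∑ i ∈ S, u i) - 1 := by
    intro S x hx
    calc ‖(∏ i ∈ S, f i x) - 1‖ ≤ (∏ i ∈ S, (1 + ‖f i x - 1‖)) - 1 :=
          norm_prod_sub_one_le S _
      _ ≤ (∏ i ∈ S, (1 + u i)) - 1 := by
          have : (∏ i ∈ S, (1 + ‖f i x - 1‖)) ≤ ∏ i ∈ S, (1 + u i) :=
            Finset.prod_le_prod (fun i _ => by positivity)
              (fun i _ => by have := hle i x hx; linarith)
          linarith
      _ ≤ Real.exp (∑ i ∈ S, u i) - 1 := by
          have := prod_one_add_le_exp S u hu0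
          linarith
  have hnorm_le : ∀ (S : Finset ι) (x : ℂ), x ∈ K → ‖∏ i ∈ S, f i x‖ ≤ B := by
    intro S x hx
    have h1 := hprodle S x hx
    have h2 : ‖∏ i ∈ S, f i x‖ - 1 ≤ ‖(∏ i ∈ S, f i x) - 1‖ := by
      have := norm_sub_norm_le (∏ i ∈ S, f i x) 1
      simpa using this
    have h3 : (∑ i ∈ S, u i) ≤ ∑' i, u i := Summable.sum_le_tsum S (fun i _ => hu0 i) hu
    have h4 : Real.exp (∑ i ∈ S, u i) ≤ B := Real.exp_le_exp.mpr h3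
    linarith
  have hkey : ∀ ε > (0:ℝ), ∃ T₀ : Finset ι, ∀ T : Finset ι, T₀ ⊆ T → ∀ x ∈ K,
      ‖(∏ i ∈ T, f i x) - (∏ i ∈ T₀, f i x)‖ ≤ B * (Real.exp ε - 1) := by
    intro ε hε
    obtain ⟨T₀, hT₀⟩ := summable_iff_vanishing.mp hu (Metric.ball 0 ε) (Metric.ball_mem_nhds 0 hε)
    refine ⟨T₀, fun T hsub x hx => ?_⟩
    have hsplit : ∏ i ∈ T, f i x = (∏ i ∈ T₀, f i x) * ∏ i ∈ T \ T₀, f i x := by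
      rw [← Finset.prod_sdiff hsub]
      ring
    rw [hsplit]
    have key : (∏ i ∈ T₀, f i x) * (∏ i ∈ T \ T₀, f i x) - (∏ i ∈ T₀, f i x)
        = (∏ i ∈ T₀, f i x) * ((∏ i ∈ T \ T₀, f i x) - 1) := by ring
    rw [key, norm_mul]
    have hdisj : Disjoint (T \ T₀) T₀ := Finset.sdiff_disjoint
    have hsum_lt : (∑ i ∈ T \ T₀, u i) < ε := by
      have := hT₀ (T \ T₀) hdisj
      rw [Metric.mem_ball, Real.dist_eq, sub_zero] at this
      calc (∑ i ∈ T \ T₀, u i) ≤ |∑ i ∈ T \ T₀, u i| := le_abs_self _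
        _ < ε := this
    have h1 := hprodle (T \ T₀) x hx
    have h2 : Real.exp (∑ i ∈ T \ T₀, u i) - 1 ≤ Real.exp ε - 1 := by
      have := Real.exp_le_exp.mpr hsum_lt.le
      linarith
    have h3 := hnorm_le T₀ x hx
    have h4 : (0:ℝ) ≤ ‖(∏ i ∈ T \ T₀, f i x) - 1‖ := norm_nonneg _
    nlinarith [norm_nonneg (∏ i ∈ T₀, f i x)]
  have hmult : ∀ x ∈ K, HasProd (fun i => f i x) (∏' i, f i x) := by
    intro x hx
    have hcauchy : CauchySeq (fun T : Finset ι => ∏ i ∈ T, f i x) := by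
      rw [Metric.cauchySeq_iff']
      intro ε hε
      have hBpos : (0:ℝ) < B := by linarith
      have hfrac : (0:ℝ) < ε / (2*B) := div_pos hε (by linarith)
      set δ := Real.log (1 + ε / (2*B)) with hδ
      have hδpos : 0 < δ := Real.log_pos (by linarith)
      obtain ⟨T₀, hT₀⟩ := hkey δ hδpos
      refine ⟨T₀, fun T hT => ?_⟩
      have hd := hT₀ T hT x hx
      rw [dist_eq_norm]
      have hexp : Real.exp δ - 1 = ε/(2*B) := by
        rw [hδ, Real.exp_log (by linarith)]
        ring
      rw [hexp] at hd
      have heq : B * (ε/(2*B)) = ε/2 := by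
        field_simp
      rw [heq] at hd
      calc ‖(∏ i ∈ T, f i x) - ∏ i ∈ T₀, f i x‖ ≤ ε/2 := hd
        _ < ε := by linarith
    obtain ⟨L, hL⟩ := cauchySeq_tendsto_of_complete hcauchy
    have hHP : HasProd (fun i => f i x) L := hL
    simpa [hHP.tprod_eq] using hHP
  rw [Metric.tendstoUniformlyOn_iff]
  intro ε hε
  have hBpos : (0:ℝ) < B := by linarith
  have hfrac : (0:ℝ) < ε / (8*B) := div_pos hε (by linarith)
  set δ := Real.log (1 + ε / (8*B)) with hδ
  have hδpos : 0 < δ := Real.log_pos (by linarith)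
  obtain ⟨T₀, hT₀⟩ := hkey δ hδpos
  have hexp : B * (Real.exp δ - 1) = ε/8 := by
    rw [hδ, Real.exp_log (by linarith)]
    field_simp
    ring
  have hT₀' : ∀ T : Finset ι, T₀ ⊆ T → ∀ x ∈ K,
      ‖(∏ i ∈ T, f i x) - ∏ i ∈ T₀, f i x‖ ≤ ε/8 := by
    intro T hT x hx
    have := hT₀ T hT x hx
    rw [hexp] at this
    exact this
  filter_upwards [eventually_ge_atTop T₀] with T hT
  intro x hx
  have htendsto : Tendsto (fun T' : Finset ι => ∏ i ∈ T', f i x) atTop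
      (𝓝 (∏' i, f i x)) := hmult x hx
  have hdist0 : dist (∏' i, f i x) (∏ i ∈ T₀, f i x) ≤ ε/8 := by
    refine le_of_tendsto (htendsto.dist (tendsto_const_nhds (x := ∏ i ∈ T₀, f i x))) ?_
    filter_upwards [eventually_ge_atTop T₀] with T' hT'
    rw [dist_eq_norm]
    exact hT₀' T' hT' x hx
  have hdist1 : dist (∏ i ∈ T₀, f i x) (∏ i ∈ T, f i x) ≤ ε/8 := by
    rw [dist_comm, dist_eq_norm]
    exact hT₀' T hT x hx
  calc dist (∏' i, f i x) (∏ i ∈ T, f i x)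
      ≤ dist (∏' i, f i x) (∏ i ∈ T₀, f i x) + dist (∏ i ∈ T₀, f i x) (∏ i ∈ T, f i x) :=
        dist_triangle _ _ _
    _ ≤ ε/8 + ε/8 := add_le_add hdist0 hdist1
    _ < ε := by linarith

end UniformProducts

section PlaceLemmas

lemma absNorm_two_le (P : GoodPlace k kt) : 2 ≤ Ideal.absNorm P.1 := by
  have h0 : Ideal.absNorm P.1 ≠ 0 := by
    simpa [Ideal.absNorm_eq_zero_iff] using P.2.2.1
  have h1 : Ideal.absNorm P.1 ≠ 1 := by
    simpa [Ideal.absNorm_eq_one_iff] using P.2.1.ne_top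
  omega

lemma card_bound (n : ℕ) (hn : 2 ≤ n) (F : Finset (Ideal (𝓞 k)))
    (hF : ∀ I ∈ F, I.IsPrime ∧ I ≠ ⊥ ∧ Ideal.absNorm I = n) :
    F.card ≤ Fintype.card (Module.Free.ChooseBasisIndex ℤ (𝓞 k)) := by
  set d := Fintype.card (Module.Free.ChooseBasisIndex ℤ (𝓞 k))
  have hdvd : (∏ I ∈ F, I) ∣ Ideal.span {(n : 𝓞 k)} := by
    refine Finset.prod_primes_dvd _
      (fun I hI => Ideal.prime_of_isPrime (hF I hI).2.1 (hF I hI).1) (fun I hI => ?_)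
    rw [Ideal.dvd_iff_le, Ideal.span_singleton_le_iff_mem]
    have := Ideal.absNorm_mem I
    rwa [(hF I hI).2.2] at this
  have habs := map_dvd (Ideal.absNorm (S := 𝓞 k)) hdvd
  rw [map_prod] at habs
  have hprod : ∏ I ∈ F, Ideal.absNorm I = n ^ F.card := by
    rw [Finset.prod_congr rfl (fun I hI => (hF I hI).2.2), Finset.prod_const]
  have hspan : Ideal.absNorm (Ideal.span {(n : 𝓞 k)}) = n ^ d := by
    rw [Ideal.absNorm_span_singleton]
    have hcast : ((n : ℕ) : 𝓞 k) = algebraMap ℤ (𝓞 k) (n : ℤ) := by push_cast; simp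
    rw [hcast, Algebra.norm_algebraMap_of_basis (Module.Free.chooseBasis ℤ (𝓞 k))]
    simp [Int.natAbs_pow]
    rfl
  rw [hprod, hspan] at habs
  exact (Nat.pow_dvd_pow_iff_le_right (by omega)).mp habs

lemma summable_place (r : ℝ) (hr : 1 < r) :
    Summable (fun P : GoodPlace k kt => (Ideal.absNorm P.1 : ℝ) ^ (-r)) := by
  set d := Fintype.card (Module.Free.ChooseBasisIndex ℤ (𝓞 k))
  have hsum : Summable (fun n : ℕ => (n : ℝ) ^ (-r)) :=
    Real.summable_nat_rpow.mpr (by linarith)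
  have hnonneg : ∀ n : ℕ, (0:ℝ) ≤ (n:ℝ) ^ (-r) := fun n => Real.rpow_nonneg (by positivity) _
  refine summable_of_sum_le (fun P => Real.rpow_nonneg (by positivity) _) (fun T => ?_)
    (c := d * ∑' n : ℕ, (n : ℝ) ^ (-r))
  rw [← Finset.sum_fiberwise_of_maps_to (g := fun P : GoodPlace k kt => Ideal.absNorm P.1)
    (t := T.image (fun P : GoodPlace k kt => Ideal.absNorm P.1))
    (fun x hx => Finset.mem_image_of_mem _ hx)]
  have hinner : ∀ n ∈ T.image (fun P : GoodPlace k kt => Ideal.absNorm P.1),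
      (∑ P ∈ T.filter (fun P => Ideal.absNorm P.1 = n), (Ideal.absNorm P.1 : ℝ) ^ (-r))
      ≤ d * (n : ℝ) ^ (-r) := by
    intro n hn
    obtain ⟨P₀, hP₀T, hP₀⟩ := Finset.mem_image.mp hn
    have hn2 : 2 ≤ n := hP₀ ▸ absNorm_two_le k kt P₀
    have hcard : (T.filter (fun P => Ideal.absNorm P.1 = n)).card ≤ d := by
      have hinjval : Function.Injective (fun P : GoodPlace k kt => P.1) :=
        fun a b h => Subtype.ext h
      rw [← Finset.card_image_of_injective _ hinjval]
      refine card_bound k n hn2 _ (fun I hI => ?_)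
      obtain ⟨P, hPmem, rfl⟩ := Finset.mem_image.mp hI
      have := (Finset.mem_filter.mp hPmem).2
      exact ⟨P.2.1, P.2.2.1, this⟩
    calc (∑ P ∈ T.filter (fun P => Ideal.absNorm P.1 = n), (Ideal.absNorm P.1 : ℝ) ^ (-r))
        = (T.filter (fun P => Ideal.absNorm P.1 = n)).card * (n:ℝ) ^ (-r) := by
          rw [Finset.sum_congr rfl (fun P hP => by rw [(Finset.mem_filter.mp hP).2]),
            Finset.sum_const, nsmul_eq_mul]
      _ ≤ d * (n : ℝ) ^ (-r) := by
          have := hnonneg n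
          have hc : ((T.filter (fun P => Ideal.absNorm P.1 = n)).card : ℝ) ≤ (d : ℝ) := by
            exact_mod_cast hcard
          nlinarith
  calc _ ≤ ∑ n ∈ T.image (fun P : GoodPlace k kt => Ideal.absNorm P.1), (d : ℝ) * (n:ℝ)^(-r) :=
        Finset.sum_le_sum hinner
    _ = d * ∑ n ∈ T.image (fun P : GoodPlace k kt => Ideal.absNorm P.1), (n:ℝ)^(-r) := by
        rw [Finset.mul_sum]
    _ ≤ d * ∑' n : ℕ, (n : ℝ) ^ (-r) := by
        have := Summable.sum_le_tsum (T.image (fun P : GoodPlace k kt => Ideal.absNorm P.1))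
          (fun n _ => hnonneg n) hsum
        have hd : (0:ℝ) ≤ d := by positivity
        nlinarith

lemma cpow_t_eq {q : ℕ} (hq : 0 < q) (s : ℂ) :
    (q:ℂ) ^ (-(2 * (s - 1))) = (q:ℂ)^2 * ((q:ℂ)^(-s))^2 := by
  have hq0 : (q:ℂ) ≠ 0 := Nat.cast_ne_zero.mpr (by omega)
  rw [show -(2 * (s - 1)) = ((2:ℕ):ℂ) + ((2:ℕ):ℂ) * (-s) by push_cast; ring,
    Complex.cpow_add _ _ hq0, Complex.cpow_natCast, Complex.cpow_nat_mul]

lemma cpow_u_eq {q : ℕ} (hq : 0 < q) (s : ℂ) :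
    (q:ℂ) ^ (-(2 * s - 1)) = (q:ℂ) * ((q:ℂ)^(-s))^2 := by
  have hq0 : (q:ℂ) ≠ 0 := Nat.cast_ne_zero.mpr (by omega)
  rw [show -(2 * s - 1) = (1:ℂ) + ((2:ℕ):ℂ) * (-s) by push_cast; ring,
    Complex.cpow_add _ _ hq0, Complex.cpow_one, Complex.cpow_nat_mul]

lemma cpow_norm_t {q : ℕ} (hq : 0 < q) (s : ℂ) :
    ‖(q:ℂ) ^ (-(2 * (s - 1)))‖ = (q:ℝ) ^ ((2:ℝ) - 2*s.re) := by
  rw [Complex.norm_natCast_cpow_of_pos hq]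
  congr 1
  simp [Complex.mul_re, Complex.sub_re]
  try ring

lemma cpow_norm_u {q : ℕ} (hq : 0 < q) (s : ℂ) :
    ‖(q:ℂ) ^ (-(2 * s - 1))‖ = (q:ℝ) ^ ((1:ℝ) - 2*s.re) := by
  rw [Complex.norm_natCast_cpow_of_pos hq]
  congr 1
  simp [Complex.mul_re, Complex.sub_re]
  try ring

lemma Lv_est (P : GoodPlace k kt) {s : ℂ} (hs : 3/2 < s.re) :
    ‖Lv k kt P s - 1‖ ≤ 4096 * (Ideal.absNorm P.1 : ℝ) ^ ((2:ℝ) - 2*s.re) := by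
  set q := Ideal.absNorm P.1 with hqdef
  have hq : 2 ≤ q := absNorm_two_le k kt P
  have hqpos : 0 < q := by omega
  have hq1 : (1:ℝ) ≤ (q:ℝ) := by exact_mod_cast Nat.one_le_iff_ne_zero.mpr (by omega)
  have htn := cpow_norm_t (q := q) hqpos s
  have hun := cpow_norm_u (q := q) hqpos s
  have ht2 : ‖(q:ℂ) ^ (-(2 * (s - 1)))‖ ≤ 1/2 := by
    rw [htn]
    calc (q:ℝ) ^ ((2:ℝ) - 2*s.re) ≤ (q:ℝ) ^ (-1:ℝ) :=
          Real.rpow_le_rpow_of_exponent_le hq1 (by linarith)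
      _ = ((q:ℝ))⁻¹ := Real.rpow_neg_one _
      _ ≤ 1/2 := by
          rw [one_div]
          apply inv_anti₀ (by norm_num)
          exact_mod_cast hq
  have hut : ‖(q:ℂ) ^ (-(2 * s - 1))‖ ≤ ‖(q:ℂ) ^ (-(2 * (s - 1)))‖ := by
    rw [htn, hun]
    exact Real.rpow_le_rpow_of_exponent_le hq1 (by linarith)
  rw [← htn]
  unfold Lv
  split_ifs with hsp
  · unfold Lsplit
    exact key_est_split ht2 hut
  · unfold Linert
    exact key_est_inert ht2 hut

end PlaceLemmas

/-- Conditions 5.5 of the paper: the majorizing local factors `L_v` have nonnegative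
Dirichlet coefficients with constant term `1`, converging for `Re s > 1`, and their product
over all non-dyadic places unramified in `kt` converges absolutely and locally uniformly on
`Re s > 3/2`. -/
theorem Lv_conditions (hdeg : finrank k kt = 2) :
    (∀ P : GoodPlace k kt, ∃ l : ℕ → ℝ, l 0 = 1 ∧ (∀ n, 0 ≤ l n) ∧
      ∀ s : ℂ, 1 < s.re →
        HasSum (fun n : ℕ => (l n : ℂ) * (Ideal.absNorm P.1 : ℂ) ^ (-(n : ℂ) * s))
          (Lv k kt P s)) ∧
    (∀ s : ℂ, 3 / 2 < s.re → Summable (fun P : GoodPlace k kt => ‖Lv k kt P s - 1‖)) ∧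
    TendstoLocallyUniformlyOn
      (fun (T : Finset (GoodPlace k kt)) (s : ℂ) => ∏ P ∈ T, Lv k kt P s)
      (fun s : ℂ => ∏' P : GoodPlace k kt, Lv k kt P s) atTop {s : ℂ | 3 / 2 < s.re} := by
  refine ⟨?_, ?_, ?_⟩
  · -- Part 1: nonnegative Dirichlet coefficients
    intro P
    set q := Ideal.absNorm P.1 with hqdef
    have hq : 2 ≤ q := absNorm_two_le k kt P
    have hqpos : 0 < q := by omega
    by_cases hsp : IsSplitIn k kt P.1
    · refine ⟨fun n => if 2 ∣ n then
          ∑ j ∈ Finset.range (n/2+1), (q:ℝ)^(2*(n/2)-j) * esplit (n/2-j) else 0, ?_, ?_, ?_⟩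
      · norm_num [Finset.sum_range_one, esplit_zero]
      · intro n
        dsimp only
        split_ifs with h
        · exact Finset.sum_nonneg fun j _ => mul_nonneg (by positivity) (esplit_nonneg _)
        · exact le_refl 0
      · intro s hs
        have H := local_hasSum hq hs esplit esplit_nonneg
          (fun τ h0 h1 => esplit_summable h0 h1)
          (fun t => (1 + 29*t - 21*t^2 + 7*t^3) / (1 - t)^4)
          (fun t ht => hasSum_esplit ht)
        have h1 := norm_lt_aux hq hs
        have hne1 : (1:ℂ) - (q:ℂ)^2 * ((q:ℂ)^(-s))^2 ≠ 0 := by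
          intro hzero
          rw [sub_eq_zero] at hzero
          have h2 := h1.1
          rw [← hzero] at h2; simp at h2
        have hne2 : (1:ℂ) - (q:ℂ) * ((q:ℂ)^(-s))^2 ≠ 0 := by
          intro hzero
          rw [sub_eq_zero] at hzero
          have h2 := h1.2
          rw [← hzero] at h2; simp at h2
        have hval : Lv k kt P s = (1 - (q:ℂ) * ((q:ℂ)^(-s))^2)⁻¹ *
            ((1 + 29*((q:ℂ)^2 * ((q:ℂ)^(-s))^2) - 21*((q:ℂ)^2 * ((q:ℂ)^(-s))^2)^2
              + 7*((q:ℂ)^2 * ((q:ℂ)^(-s))^2)^3) / (1 - (q:ℂ)^2 * ((q:ℂ)^(-s))^2)^4) := by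
          unfold Lv
          rw [if_pos hsp]
          unfold Lsplit
          rw [← hqdef, cpow_t_eq hqpos, cpow_u_eq hqpos]
          field_simp
        rw [hval]
        exact H
    · have hin : IsInertIn k kt P.1 := P.2.2.2.2.resolve_left hsp
      refine ⟨fun n => if 2 ∣ n then
          ∑ j ∈ Finset.range (n/2+1), (q:ℝ)^(2*(n/2)-j) * einert (n/2-j) else 0, ?_, ?_, ?_⟩
      · norm_num [Finset.sum_range_one, einert_zero]
      · intro n
        dsimp only
        split_ifs with h
        · exact Finset.sum_nonneg fun j _ => mul_nonneg (by positivity) (einert_nonneg _)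
        · exact le_refl 0
      · intro s hs
        have H := local_hasSum hq hs einert einert_nonneg
          (fun τ h0 h1 => einert_summable h0 h1)
          (fun t => (1 + 6*t - 3*t^2) / (1 - t)^3)
          (fun t ht => hasSum_einert ht)
        have h1 := norm_lt_aux hq hs
        have hne1 : (1:ℂ) - (q:ℂ)^2 * ((q:ℂ)^(-s))^2 ≠ 0 := by
          intro hzero
          rw [sub_eq_zero] at hzero
          have h2 := h1.1
          rw [← hzero] at h2; simp at h2
        have hne2 : (1:ℂ) - (q:ℂ) * ((q:ℂ)^(-s))^2 ≠ 0 := by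
          intro hzero
          rw [sub_eq_zero] at hzero
          have h2 := h1.2
          rw [← hzero] at h2; simp at h2
        have hval : Lv k kt P s = (1 - (q:ℂ) * ((q:ℂ)^(-s))^2)⁻¹ *
            ((1 + 6*((q:ℂ)^2 * ((q:ℂ)^(-s))^2) - 3*((q:ℂ)^2 * ((q:ℂ)^(-s))^2)^2)
              / (1 - (q:ℂ)^2 * ((q:ℂ)^(-s))^2)^3) := by
          unfold Lv
          rw [if_neg hsp]
          unfold Linert
          rw [← hqdef, cpow_t_eq hqpos, cpow_u_eq hqpos]
          field_simp
        rw [hval]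
        exact H
  · -- Part 2: summability of ‖Lv - 1‖
    intro s hs
    refine Summable.of_nonneg_of_le (fun P => norm_nonneg _) (fun P => ?_)
      ((summable_place k kt (2*s.re - 2) (by linarith)).mul_left 4096)
    have h1 := Lv_est k kt P hs
    have h2 : ((Ideal.absNorm P.1 : ℝ)) ^ ((2:ℝ) - 2*s.re)
        = (Ideal.absNorm P.1 : ℝ) ^ (-(2*s.re-2)) := by
      congr 1; ring
    rw [h2] at h1
    exact h1
  · -- Part 3: locally uniform convergence of the product
    rw [tendstoLocallyUniformlyOn_iff_forall_isCompact
      (isOpen_lt continuous_const Complex.continuous_re)]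
    intro K hKsub hK
    rcases K.eq_empty_or_nonempty with rfl | hne
    · exact tendstoUniformlyOn_empty
    obtain ⟨s₀, hs₀K, hmin⟩ := hK.exists_isMinOn hne Complex.continuous_re.continuousOn
    have hs₀ : 3/2 < s₀.re := hKsub hs₀K
    refine tendstoUniformlyOn_finset_prod
      (u := fun P : GoodPlace k kt => 4096 * (Ideal.absNorm P.1 : ℝ) ^ (-(2*s₀.re - 2)))
      ((summable_place k kt _ (by linarith)).mul_left 4096) ?_
    intro P x hx
    have hx2 : 3/2 < x.re := hKsub hx
    have h1 := Lv_est k kt P hx2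
    have h2 : (Ideal.absNorm P.1:ℝ) ^ ((2:ℝ) - 2*x.re)
        ≤ (Ideal.absNorm P.1:ℝ) ^ (-(2*s₀.re - 2)) := by
      apply Real.rpow_le_rpow_of_exponent_le
      · have hge := absNorm_two_le k kt P
        have : (1:ℕ) ≤ Ideal.absNorm P.1 := by omega
        exact_mod_cast this
      · have := (isMinOn_iff.mp hmin) x hx
        linarith
    show ‖Lv k kt P x - 1‖ ≤ 4096 * (Ideal.absNorm P.1 : ℝ) ^ (-(2*s₀.re - 2))
    linarith
end

section
/- Let X be a locally compact Hausdorff topological space equipped with a Borel measure μ that is finite on compact sets and positive on every nonempty open subset, let U ⊆ X be open, let f : X → ℝ be continuous with f(y) > 0 for all y ∈ U, and let x ∈ U and r ∈ ℂ. Then there exists a continuous function Φ : X → ℝ with 0 ≤ Φ, with compact support contained in U, such that the function s ↦ ∫_X Φ(y)·f(y)^{s−2} dμ(y) is entire (holomorphic on all of ℂ) and is nonzero at s = r. -/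
open MeasureTheory

/-- Abstract content of the paper's Lemma 5.7: existence of a nonnegative continuous test
function `Φ` with compact support in `U` whose associated local zeta integral
`s ↦ ∫ Φ(y) f(y)^(s-2) dμ(y)` is entire and nonvanishing at `s = r`. -/
theorem exists_test_function {X : Type*} [TopologicalSpace X] [LocallyCompactSpace X]
    [T2Space X] [MeasurableSpace X] [BorelSpace X] (μ : Measure X)
    [IsFiniteMeasureOnCompacts μ] [μ.IsOpenPosMeasure]
    (U : Set X) (hU : IsOpen U) (f : X → ℝ) (hf : Continuous f)
    (hfpos : ∀ y ∈ U, 0 < f y) (x : X) (hx : x ∈ U) (r : ℂ) :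
    ∃ Φ : X → ℝ, Continuous Φ ∧ (∀ y, 0 ≤ Φ y) ∧
      HasCompactSupport Φ ∧ tsupport Φ ⊆ U ∧
      Differentiable ℂ
        (fun s : ℂ => ∫ y, (Φ y : ℂ) * Complex.exp ((s - 2) * (Real.log (f y) : ℂ)) ∂μ) ∧
      (∫ y, (Φ y : ℂ) * Complex.exp ((r - 2) * (Real.log (f y) : ℂ)) ∂μ) ≠ 0 := by
  classical
  set L : X → ℝ := fun y => Real.log (f y) with hLdef
  set Lx : ℝ := Real.log (f x)
  set ε : ℝ := (4 * (‖r - 2‖ + 1))⁻¹ with hε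
  have hεpos : 0 < ε := by positivity
  have hεsmall : ‖r - 2‖ * ε ≤ 1 / 4 := by
    rw [hε, div_eq_mul_inv, mul_comm (4 : ℝ), mul_inv]
    have h1 : (0:ℝ) < ‖r - 2‖ + 1 := by positivity
    calc ‖r-2‖ * ((‖r-2‖+1)⁻¹ * 4⁻¹)
        = (‖r-2‖ * (‖r-2‖+1)⁻¹) * 4⁻¹ := by ring
      _ ≤ 1 * 4⁻¹ := by
          gcongr
          rw [mul_inv_le_iff₀ h1]
          linarith
      _ = 1 * 4⁻¹ := rfl
  -- continuity of log ∘ f at x gives an open set where `L` is within `ε` of `Lx`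
  have hLx : ContinuousAt L x :=
    (Real.continuousAt_log (hfpos x hx).ne').comp hf.continuousAt
  have hmem : {y | |L y - Lx| < ε} ∈ nhds x := by
    have := hLx (Metric.ball_mem_nhds Lx hεpos)
    exact this
  obtain ⟨O, hOsub, hOopen, hxO⟩ := mem_nhds_iff.mp hmem
  set V : Set X := U ∩ O with hV
  have hVopen : IsOpen V := hU.inter hOopen
  have hxV : x ∈ V := ⟨hx, hxO⟩
  obtain ⟨K, hKcomp, hxK, hKV⟩ := exists_compact_subset hVopen hxV
  obtain ⟨Φ, hΦ1, hΦ0, hΦsupp, hΦicc⟩ :=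
    exists_continuous_one_zero_of_isCompact (isCompact_singleton (x := x))
      (isOpen_interior (s := K)).isClosed_compl
      (by simpa [Set.disjoint_left] using hxK)
  have hΦcont : Continuous (Φ : X → ℝ) := Φ.continuous
  have hΦnn : ∀ y, 0 ≤ Φ y := fun y => (hΦicc y).1
  have hΦx : Φ x = 1 := hΦ1 rfl
  have hts : tsupport (Φ : X → ℝ) ⊆ K := by
    apply closure_minimal _ hKcomp.isClosed
    intro y hy
    by_contra h
    exact hy (hΦ0 (by simpa using fun h' => h (interior_subset h')))
  have htsU : tsupport (Φ : X → ℝ) ⊆ U := fun y hy => (hKV (hts hy)).1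
  have hVbound : ∀ y ∈ tsupport (Φ : X → ℝ), |L y - Lx| < ε := fun y hy =>
    hOsub (hKV (hts hy)).2
  set M : ℝ := |Lx| + ε with hMdef
  have hM : ∀ y ∈ tsupport (Φ : X → ℝ), |L y| ≤ M := by
    intro y hy
    have := hVbound y hy
    calc |L y| = |Lx + (L y - Lx)| := by ring_nf
      _ ≤ |Lx| + |L y - Lx| := abs_add_le _ _
      _ ≤ |Lx| + ε := by linarith
  -- basic integrability facts
  have hΦint : Integrable (Φ : X → ℝ) μ := hΦcont.integrable_of_hasCompactSupport hΦsupp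
  have hLmeas : Measurable L := by
    rw [hLdef]; exact Real.measurable_log.comp hf.measurable
  have hmeas : ∀ s : ℂ, AEStronglyMeasurable
      (fun y => (Φ y : ℂ) * Complex.exp ((s - 2) * (L y : ℂ))) μ := by
    intro s
    exact ((Complex.measurable_ofReal.comp hΦcont.measurable).mul
      (Complex.measurable_exp.comp
        (measurable_const.mul (Complex.measurable_ofReal.comp hLmeas)))).aestronglyMeasurable
  have hnorm : ∀ (s : ℂ) (y : X), ‖(Φ y : ℂ) * Complex.exp ((s - 2) * (L y : ℂ))‖
      ≤ Real.exp ((‖s‖ + 2) * M) * Φ y := by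
    intro s y
    by_cases hy : y ∈ tsupport (Φ : X → ℝ)
    · rw [norm_mul, Complex.norm_real, Real.norm_eq_abs,
        Complex.norm_exp, abs_of_nonneg (hΦnn y), mul_comm]
      gcongr
      · exact hΦnn y
      have h1 : ((s - 2) * (L y : ℂ)).re = (s - 2).re * L y := by
        simp [Complex.mul_re]
      rw [h1]
      calc (s - 2).re * L y ≤ |(s - 2).re * L y| := le_abs_self _
        _ = |(s-2).re| * |L y| := abs_mul _ _
        _ ≤ ‖s - 2‖ * M :=
            mul_le_mul (Complex.abs_re_le_norm _) (hM y hy) (abs_nonneg _) (norm_nonneg _)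
        _ ≤ (‖s‖ + 2) * M := by
            have hMnn : 0 ≤ M := le_trans (abs_nonneg _) (hM y hy)
            gcongr
            calc ‖s - 2‖ ≤ ‖s‖ + ‖(2:ℂ)‖ :=
              (norm_sub_le s 2)
              _ = ‖s‖ + 2 := by norm_num
    · have : Φ y = 0 := image_eq_zero_of_notMem_tsupport hy
      simp [this]
  have hint : ∀ s : ℂ, Integrable
      (fun y => (Φ y : ℂ) * Complex.exp ((s - 2) * (L y : ℂ))) μ := by
    intro s
    refine Integrable.mono (g := fun y => Real.exp ((‖s‖ + 2) * M) * Φ y)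
      (hΦint.const_mul _) (hmeas s) ?_
    filter_upwards with y
    refine (hnorm s y).trans (le_abs_self _ |>.trans ?_)
    rw [Real.norm_eq_abs]
  -- the local zeta integral is entire
  have hdiff : Differentiable ℂ
      (fun s : ℂ => ∫ y, (Φ y : ℂ) * Complex.exp ((s - 2) * (L y : ℂ)) ∂μ) := by
    intro s₀
    have key := hasDerivAt_integral_of_dominated_loc_of_deriv_le (μ := μ)
      (F := fun s y => (Φ y : ℂ) * Complex.exp ((s - 2) * (L y : ℂ)))
      (F' := fun s y => (Φ y : ℂ) * (Complex.exp ((s - 2) * (L y : ℂ)) * ((L y : ℂ))))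
      (x₀ := s₀) (s := Metric.ball s₀ 1)
      (bound := fun y => M * (Real.exp ((‖s₀‖ + 3) * M) * Φ y))
      (Metric.ball_mem_nhds s₀ one_pos)
      (Filter.Eventually.of_forall fun s => hmeas s) (hint s₀)
      ?_ ?_ ?_ ?_
    · exact key.2.differentiableAt
    · exact ((Complex.measurable_ofReal.comp hΦcont.measurable).mul
        ((Complex.measurable_exp.comp
          (measurable_const.mul (Complex.measurable_ofReal.comp hLmeas))).mul
          (Complex.measurable_ofReal.comp hLmeas))).aestronglyMeasurable
    · filter_upwards with y
      intro s hs
      by_cases hy : y ∈ tsupport (Φ : X → ℝ)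
      · have hMnn : 0 ≤ M := le_trans (abs_nonneg _) (hM y hy)
        rw [norm_mul, norm_mul, Complex.norm_real, Complex.norm_real, Real.norm_eq_abs,
          Real.norm_eq_abs, abs_of_nonneg (hΦnn y), Complex.norm_exp]
        have habs : ‖s - 2‖ ≤ ‖s₀‖ + 3 := by
          calc ‖s - 2‖ = ‖(s - s₀) + (s₀ - 2)‖ := by ring_nf
            _ ≤ ‖s - s₀‖ + ‖s₀ - 2‖ := norm_add_le _ _
            _ ≤ 1 + (‖s₀‖ + ‖(2:ℂ)‖) := by
                gcongr
                · exact le_of_lt (by simpa [Complex.dist_eq] using Metric.mem_ball.mp hs)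
                · exact norm_sub_le s₀ 2
            _ = ‖s₀‖ + 3 := by norm_num; ring
        have h1 : ((s - 2) * (L y : ℂ)).re ≤ (‖s₀‖ + 3) * M := by
          have : ((s - 2) * (L y : ℂ)).re = (s - 2).re * L y := by simp [Complex.mul_re]
          rw [this]
          calc (s-2).re * L y ≤ |(s-2).re * L y| := le_abs_self _
            _ = |(s-2).re| * |L y| := abs_mul _ _
            _ ≤ (‖s₀‖ + 3) * M :=
                mul_le_mul ((Complex.abs_re_le_norm _).trans habs) (hM y hy) (abs_nonneg _)
                  (by positivity)
        calc Φ y * (Real.exp ((s-2) * (L y:ℂ)).re * |L y|)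
            ≤ Φ y * (Real.exp ((‖s₀‖ + 3) * M) * M) :=
              mul_le_mul_of_nonneg_left
                (mul_le_mul (Real.exp_le_exp.mpr h1) (hM y hy) (abs_nonneg _)
                  (Real.exp_nonneg _)) (hΦnn y)
          _ = M * (Real.exp ((‖s₀‖ + 3) * M) * Φ y) := by ring
      · have : Φ y = 0 := image_eq_zero_of_notMem_tsupport hy
        simp [this]
    · exact (hΦint.const_mul _).const_mul _
    · filter_upwards with y
      intro s hs
      have h1 : HasDerivAt (fun s : ℂ => (s - 2) * (L y : ℂ)) (L y : ℂ) s := by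
        simpa using ((hasDerivAt_id s).sub_const 2).mul_const (L y : ℂ)
      exact (h1.cexp).const_mul (Φ y : ℂ)
  -- nonvanishing at `s = r`
  have hne : (∫ y, (Φ y : ℂ) * Complex.exp ((r - 2) * (L y : ℂ)) ∂μ) ≠ 0 := by
    set g : X → ℂ := fun y => (Φ y : ℂ) * Complex.exp ((r - 2) * ((L y : ℂ) - (Lx : ℂ))) with hg
    have heq : ∀ y, (Φ y : ℂ) * Complex.exp ((r - 2) * (L y : ℂ))
        = Complex.exp ((r - 2) * (Lx : ℂ)) * g y := by
      intro y
      rw [hg]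
      simp only []
      rw [mul_comm (Complex.exp ((r-2) * Lx)), mul_assoc, ← Complex.exp_add]
      ring_nf
    have hgint : Integrable g μ := by
      have : g = fun y => Complex.exp (-((r - 2) * (Lx : ℂ))) *
          ((Φ y : ℂ) * Complex.exp ((r - 2) * (L y : ℂ))) := by
        funext y
        rw [heq y, ← mul_assoc, ← Complex.exp_add]
        simp
      rw [this]
      exact (hint r).const_mul _
    have hre : ∀ y, 2⁻¹ * Φ y ≤ (g y).re := by
      intro y
      rw [hg]
      simp only []
      rw [Complex.re_ofReal_mul]
      by_cases hy : Φ y = 0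
      · simp [hy]
      · have hyt : y ∈ tsupport (Φ : X → ℝ) := subset_tsupport _ hy
        have h1 : ‖(r - 2) * ((L y : ℂ) - (Lx : ℂ))‖ ≤ 1 / 4 := by
          rw [norm_mul]
          have : ((L y : ℂ) - (Lx : ℂ)) = ((L y - Lx : ℝ) : ℂ) := by push_cast; ring
          rw [this, Complex.norm_real, Real.norm_eq_abs]
          calc ‖r - 2‖ * |L y - Lx| ≤ ‖r - 2‖ * ε := by
                gcongr
                exact (hVbound y hyt).le
            _ ≤ 1 / 4 := hεsmall
        have h2 : (1 : ℝ) - (Complex.exp ((r - 2) * ((L y : ℂ) - (Lx : ℂ)))).re ≤ 1 / 2 := by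
          set z := (r - 2) * ((L y : ℂ) - (Lx : ℂ))
          calc (1:ℝ) - (Complex.exp z).re = ((1 : ℂ) - Complex.exp z).re := by simp
            _ ≤ ‖1 - Complex.exp z‖ := Complex.re_le_norm _
            _ = ‖Complex.exp z - 1‖ := norm_sub_rev _ _
            _ ≤ 2 * ‖z‖ := Complex.norm_exp_sub_one_le (h1.trans (by norm_num))
            _ ≤ 1 / 2 := by linarith
        have h3 : (2:ℝ)⁻¹ ≤ (Complex.exp ((r - 2) * ((L y : ℂ) - (Lx : ℂ)))).re := by linarith
        calc 2⁻¹ * Φ y ≤ (Complex.exp ((r - 2) * ((L y : ℂ) - (Lx : ℂ)))).re * Φ y :=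
              mul_le_mul_of_nonneg_right h3 (hΦnn y)
          _ = Φ y * (Complex.exp ((r - 2) * ((L y : ℂ) - (Lx : ℂ)))).re := mul_comm _ _
    have hΦpos : 0 < ∫ y, Φ y ∂μ :=
      hΦcont.integral_pos_of_hasCompactSupport_nonneg_nonzero hΦsupp hΦnn
        (by rw [hΦx]; exact one_ne_zero)
    have hgre : 0 < (∫ y, g y ∂μ).re := by
      have h := integral_re (𝕜 := ℂ) hgint
      simp only [RCLike.re_to_complex] at h
      rw [← h]
      have : 0 < ∫ y, 2⁻¹ * Φ y ∂μ := by
        rw [integral_const_mul]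
        positivity
      refine lt_of_lt_of_le this (integral_mono (hΦint.const_mul _) hgint.re hre)
    have hgne : (∫ y, g y ∂μ) ≠ 0 := fun h => by simp [h] at hgre
    have : (∫ y, (Φ y : ℂ) * Complex.exp ((r - 2) * (L y : ℂ)) ∂μ)
        = Complex.exp ((r - 2) * (Lx : ℂ)) * ∫ y, g y ∂μ := by
      rw [← integral_const_mul]
      exact integral_congr_ae (Filter.Eventually.of_forall heq)
    rw [this]
    exact mul_ne_zero (Complex.exp_ne_zero _) hgne
  exact ⟨Φ, hΦcont, hΦnn, hΦsupp, htsU, hdiff, hne⟩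
end
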